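/- arXiv:1912.10409 — 2 statements merged into one kernel-verified Lean document; each statement's English description precedes it below -/
import Mathlib

section
/- Let R be an Artin algebra and n ≥ 2. Then R satisfies the Strong Nakayama Conjecture if and only if R[t]/(t^n) satisfies it; that is, for every nonzero finitely generated left R-module M there exists an integer k ≥ 0 with Ext^k_R(M,R) ≠ 0, if and only if for every nonzero finitely generated left R[t]/(t^n)-module N there exists an integer k ≥ 0 with Ext^k_{R[t]/(t^n)}(N, R[t]/(t^n)) ≠ 0. -/
/-!
Taking the coefficient of `t^(n-1)` makes `Λ = R[t]/(t^n)` a Frobenius extension of `R`: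
`f ↦ top ∘ f` is a natural isomorphism `Hom_Λ(P, Λ) ≅ Hom_R(P, R)`. As `Λ ≅ R^n` is free over
`R`, restricting a projective resolution of a `Λ`-module `N` gives one over `R`, hence
`Ext^k_Λ(N, Λ) ≅ Ext^k_R(N, R)`. A finitely generated nonzero `Λ`-module stays so over `R`, and
an `R`-module `M` is the restriction of the `Λ`-module on which `t` acts by `0`, so the two
conjectures imply each other.
-/

noncomputable section

namespace Paper

universe u

open Polynomial

variable (R : Type u) [Ring R] (n : ℕ)

/-- The defining relation of `R[t]/(t^n)`. -/
def truncRel (a b : Polynomial R) : Prop := a = Polynomial.X ^ n ∧ b = 0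

/-- The ring `R[t]/(t^n)`: the quotient of the polynomial ring `R[t]` by the two-sided ideal
generated by `t^n`. -/
abbrev TruncPoly : Type u := RingQuot (truncRel R n)

/-- The canonical projection `R[t] → R[t]/(t^n)`. -/
def truncMk : Polynomial R →+* TruncPoly R n := RingQuot.mkRingHom _

/-- The canonical ring homomorphism `R → R[t]/(t^n)`. -/
def truncC : R →+* TruncPoly R n := (truncMk R n).comp (Polynomial.C : R →+* Polynomial R)

/-- The image of `t` in `R[t]/(t^n)`. -/
def tgen : TruncPoly R n := truncMk R n Polynomial.X

open CategoryTheory in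
variable (Λ : Type u) [Ring Λ] in
/-- There exists `k ≥ 0` with `Ext^k_Λ(M, Λ) ≠ 0`. -/
def SomeExtNonzero (M : Type u) [AddCommGroup M] [Module Λ M] : Prop :=
  ∃ k : ℕ, ¬ Limits.IsZero
    (((Ext ℤ (ModuleCat.{u} Λ) k).obj (Opposite.op (ModuleCat.of Λ M))).obj (ModuleCat.of Λ Λ))

section Coefficients

variable {R n}

lemma truncMk_surjective : Function.Surjective (truncMk R n) := RingQuot.mkRingHom_surjective _

lemma truncMk_X_pow : truncMk R n (X ^ n) = 0 :=
  (RingQuot.mkRingHom_rel ⟨rfl, rfl⟩).trans (map_zero _)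

lemma tgen_pow_eq_zero : tgen R n ^ n = 0 := by
  rw [tgen, ← map_pow, truncMk_X_pow]

lemma commute_truncC_tgen_pow (a : R) (i : ℕ) : Commute (truncC R n a) (tgen R n ^ i) := by
  rw [tgen, ← map_pow]
  exact (commute_X_pow (C a) i).symm.map (truncMk R n)

lemma X_pow_dvd_sub_of_rel {f g : R[X]} (h : RingQuot.Rel (truncRel R n) f g) :
    X ^ n ∣ f - g := by
  induction h with
  | of h => obtain ⟨rfl, rfl⟩ := h; exact ⟨1, by simp⟩
  | add_left _ ih => rwa [add_sub_add_right_eq_sub]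
  | @mul_left _ _ c _ ih =>
    obtain ⟨d, hd⟩ := ih
    exact ⟨d * c, by rw [← sub_mul, hd, mul_assoc]⟩
  | @mul_right c _ _ _ ih =>
    obtain ⟨d, hd⟩ := ih
    exact ⟨c * d, by rw [← mul_sub, hd, ← mul_assoc, ← (commute_X_pow c n).eq, mul_assoc]⟩

def coeffs (x : TruncPoly R n) : Fin n → R :=
  Quot.lift (fun f i => f.coeff i)
    (fun _ _ h => funext fun i => sub_eq_zero.mp <| by
      rw [← coeff_sub]
      exact X_pow_dvd_iff.mp (X_pow_dvd_sub_of_rel h) i i.2)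
    x.toQuot

lemma coeffs_truncMk (f : R[X]) (i : Fin n) : coeffs (truncMk R n f) i = f.coeff i := by
  rw [truncMk, RingQuot.mkRingHom_def]
  rfl

lemma coeffs_injective : Function.Injective (coeffs (R := R) (n := n)) := by
  intro x y h
  obtain ⟨f, rfl⟩ := truncMk_surjective x
  obtain ⟨g, rfl⟩ := truncMk_surjective y
  obtain ⟨d, hd⟩ : X ^ n ∣ f - g := X_pow_dvd_iff.mpr fun i hi => by
    simpa [coeffs_truncMk, sub_eq_zero] using congrFun h ⟨i, hi⟩
  rw [← sub_eq_zero, ← map_sub, hd, map_mul, truncMk_X_pow, zero_mul]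

lemma coeffs_add (x y : TruncPoly R n) : coeffs (x + y) = coeffs x + coeffs y := by
  obtain ⟨f, rfl⟩ := truncMk_surjective x
  obtain ⟨g, rfl⟩ := truncMk_surjective y
  funext i
  rw [← map_add, Pi.add_apply, coeffs_truncMk, coeffs_truncMk, coeffs_truncMk, coeff_add]

lemma coeffs_truncC_mul (a : R) (x : TruncPoly R n) (i : Fin n) :
    coeffs (truncC R n a * x) i = a * coeffs x i := by
  obtain ⟨f, rfl⟩ := truncMk_surjective x
  rw [truncC, RingHom.comp_apply, ← map_mul, coeffs_truncMk, coeffs_truncMk, coeff_C_mul]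

lemma coeffs_tgen_pow_mul_of_le {i : ℕ} (x : TruncPoly R n) {j : Fin n} (hij : i ≤ j) :
    coeffs (tgen R n ^ i * x) j = coeffs x ⟨j - i, by omega⟩ := by
  obtain ⟨f, rfl⟩ := truncMk_surjective x
  rw [tgen, ← map_pow, ← map_mul, coeffs_truncMk, coeffs_truncMk, coeff_X_pow_mul', if_pos hij]

lemma coeffs_tgen_pow_mul_of_lt {i : ℕ} (x : TruncPoly R n) {j : Fin n} (hji : j < i) :
    coeffs (tgen R n ^ i * x) j = 0 := by
  obtain ⟨f, rfl⟩ := truncMk_surjective x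
  rw [tgen, ← map_pow, ← map_mul, coeffs_truncMk, coeff_X_pow_mul', if_neg (by omega)]

def ofCoeffs (v : Fin n → R) : TruncPoly R n :=
  ∑ i, truncC R n (v i) * tgen R n ^ (i : ℕ)

lemma coeffs_ofCoeffs (v : Fin n → R) : coeffs (ofCoeffs v) = v := by
  funext j
  have : ofCoeffs v = truncMk R n (∑ i, C (v i) * X ^ (i : ℕ)) := by
    simp [ofCoeffs, truncC, tgen]
  rw [this, coeffs_truncMk]
  simp [coeff_C_mul, coeff_X_pow, Fin.val_inj]

lemma ofCoeffs_coeffs (x : TruncPoly R n) : ofCoeffs (coeffs x) = x :=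
  coeffs_injective (coeffs_ofCoeffs _)

lemma ofCoeffs_add (v w : Fin n → R) : ofCoeffs (v + w) = ofCoeffs v + ofCoeffs w := by
  simp only [ofCoeffs, Pi.add_apply, map_add, add_mul, Finset.sum_add_distrib]

lemma ofCoeffs_smul (a : R) (v : Fin n → R) : ofCoeffs (a • v) = truncC R n a * ofCoeffs v := by
  simp only [ofCoeffs, Pi.smul_apply, smul_eq_mul, map_mul, mul_assoc, Finset.mul_sum]

end Coefficients

section Frobenius

open CategoryTheory

variable {R n}

lemma map_smul_of_commute_truncC_tgen {M M' : Type*} [AddCommGroup M]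
    [Module (TruncPoly R n) M] [AddCommGroup M'] [Module (TruncPoly R n) M'] (φ : M →+ M')
    (hC : ∀ (a : R) (m : M), φ (truncC R n a • m) = truncC R n a • φ m)
    (ht : ∀ m : M, φ (tgen R n • m) = tgen R n • φ m) (x : TruncPoly R n) (m : M) :
    φ (x • m) = x • φ m := by
  have htpow (k : ℕ) (m : M) : φ (tgen R n ^ k • m) = tgen R n ^ k • φ m := by
    induction k generalizing m with
    | zero => simp
    | succ k ih => rw [pow_succ, mul_smul, mul_smul, ih, ht]
  obtain ⟨f, rfl⟩ := truncMk_surjective x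
  induction f using Polynomial.induction_on' generalizing m with
  | add f g hf hg => rw [map_add, add_smul, add_smul, map_add, hf, hg]
  | monomial k a =>
    rw [← C_mul_X_pow_eq_monomial, map_mul, map_pow, mul_smul, mul_smul]
    exact (hC a _).trans (congrArg _ (htpow k m))

variable (R n) in
def coeffsLinearEquiv :
    (ModuleCat.restrictScalars (truncC R n)).obj (.of _ (TruncPoly R n)) ≃ₗ[R] (Fin n → R) where
  toFun := coeffs
  invFun := ofCoeffs
  left_inv := ofCoeffs_coeffs
  right_inv := coeffs_ofCoeffs
  map_add' := coeffs_add
  map_smul' a x := funext (coeffs_truncC_mul a x)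

def topIndex (hn : 0 < n) : Fin n := ⟨n - 1, by omega⟩

def topCoeff (hn : 0 < n) :
    (ModuleCat.restrictScalars (truncC R n)).obj (.of _ (TruncPoly R n)) ⟶ .of R R :=
  ModuleCat.ofHom (X := (ModuleCat.restrictScalars (truncC R n)).obj (.of _ (TruncPoly R n)))
    (Y := R) (LinearMap.proj (topIndex hn) ∘ₗ (coeffsLinearEquiv R n).toLinearMap)

section
variable {P : ModuleCat.{u} (TruncPoly R n)}
  (g : (ModuleCat.restrictScalars (truncC R n)).obj P ⟶ .of R R)

/-- Inverse to `f ↦ topCoeff ∘ f`: the `t^j`-coefficient of `f p` is the top coefficient of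
`f (t^(n-1-j) p)`. -/
def ofTopCoeffAddHom : P →+ TruncPoly R n :=
  AddMonoidHom.mk' (fun p => ofCoeffs fun j => g.hom (tgen R n ^ (n - 1 - j) • p)) fun p q => by
    rw [← ofCoeffs_add]
    congr 1
    funext j
    rw [smul_add]
    exact map_add g.hom _ _

lemma ofTopCoeffAddHom_apply (p : P) :
    ofTopCoeffAddHom g p = ofCoeffs fun j => g.hom (tgen R n ^ (n - 1 - j) • p) := rfl

lemma ofTopCoeffAddHom_truncC_smul (a : R) (p : P) :
    ofTopCoeffAddHom g (truncC R n a • p) = truncC R n a * ofTopCoeffAddHom g p := by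
  rw [ofTopCoeffAddHom_apply, ofTopCoeffAddHom_apply, ← ofCoeffs_smul]
  congr 1
  funext j
  rw [smul_smul, ← (commute_truncC_tgen_pow a _).eq, ← smul_smul]
  exact g.hom.map_smul a _

lemma ofTopCoeffAddHom_tgen_smul (p : P) :
    ofTopCoeffAddHom g (tgen R n • p) = tgen R n * ofTopCoeffAddHom g p := by
  refine coeffs_injective (funext fun j => ?_)
  rw [← pow_one (tgen R n), ofTopCoeffAddHom_apply, coeffs_ofCoeffs, smul_smul, ← pow_add]
  rcases Nat.eq_zero_or_pos j with hj | hj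
  · rw [coeffs_tgen_pow_mul_of_lt _ (by omega), hj, Nat.sub_zero, Nat.sub_add_cancel (by omega),
      tgen_pow_eq_zero, zero_smul]
    exact map_zero g.hom
  · rw [coeffs_tgen_pow_mul_of_le _ hj, ofTopCoeffAddHom_apply, coeffs_ofCoeffs]
    congr 3
    dsimp only
    omega

def ofTopCoeff : P ⟶ .of _ (TruncPoly R n) :=
  ModuleCat.ofHom
    { toFun := ofTopCoeffAddHom g
      map_add' := map_add _
      map_smul' := map_smul_of_commute_truncC_tgen _ (ofTopCoeffAddHom_truncC_smul g)
        (ofTopCoeffAddHom_tgen_smul g) }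

end

def frobeniusEquiv (hn : 0 < n) (P : ModuleCat.{u} (TruncPoly R n)) :
    (P ⟶ .of _ (TruncPoly R n)) ≃+ ((ModuleCat.restrictScalars (truncC R n)).obj P ⟶ .of R R) where
  toFun f := (ModuleCat.restrictScalars (truncC R n)).map f ≫ topCoeff hn
  invFun := ofTopCoeff
  left_inv f := by
    ext p
    refine coeffs_injective (funext fun j => ?_)
    change coeffs (ofTopCoeffAddHom _ p) j = _
    rw [ofTopCoeffAddHom_apply, coeffs_ofCoeffs]
    change coeffs (f.hom (tgen R n ^ (n - 1 - j) • p)) (topIndex hn) = _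
    rw [map_smul, smul_eq_mul, coeffs_tgen_pow_mul_of_le _ (by simp only [topIndex]; omega)]
    congr
    simp only [topIndex]
    omega
  right_inv g := by
    ext p
    change coeffs (ofCoeffs fun j : Fin n => g.hom (tgen R n ^ (n - 1 - j) • (show P from p)))
      (topIndex hn) = g.hom p
    rw [coeffs_ofCoeffs, topIndex, Nat.sub_self, pow_zero, one_smul]
  map_add' f f' := by
    rw [Functor.map_add, Preadditive.add_comp]

lemma frobeniusEquiv_naturality (hn : 0 < n) {P P' : ModuleCat.{u} (TruncPoly R n)} (h : P' ⟶ P)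
    (f : P ⟶ .of _ (TruncPoly R n)) :
    frobeniusEquiv hn P' (h ≫ f) =
      (ModuleCat.restrictScalars (truncC R n)).map h ≫ frobeniusEquiv hn P f := by
  simp [frobeniusEquiv]

end Frobenius

section RestrictScalars

open CategoryTheory Limits

variable {A B : Type u} [Ring A] [Ring B] (f : A →+* B)

instance : (ModuleCat.restrictScalars.{u} f).PreservesHomology :=
  Functor.preservesHomology_of_map_exact _ fun S hS => by
    rw [ShortComplex.moduleCat_exact_iff] at hS ⊢
    exact hS

/-- `coextendScalars f = Hom_A(B, -)` preserves epimorphisms, so its left adjoint preserves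
projectives. -/
lemma projective_restrictScalars_obj
    [Module.Projective A ((ModuleCat.restrictScalars f).obj (.of B B))]
    (P : ModuleCat.{u} B) [Projective P] : Projective ((ModuleCat.restrictScalars f).obj P) :=
  have : (ModuleCat.coextendScalars f).PreservesEpimorphisms := ⟨fun g hg => by
    rw [ModuleCat.epi_iff_surjective] at hg ⊢
    exact fun h => Module.projective_lifting_property g.hom h hg⟩
  (ModuleCat.restrictCoextendScalarsAdj f).map_projective P ‹_›

variable [Module.Projective A ((ModuleCat.restrictScalars f).obj (.of B B))]

def _root_.CategoryTheory.ProjectiveResolution.restrictScalars {N : ModuleCat.{u} B}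
    (P : ProjectiveResolution N) :
    ProjectiveResolution ((ModuleCat.restrictScalars f).obj N) where
  complex := ((ModuleCat.restrictScalars f).mapHomologicalComplex _).obj P.complex
  projective m := projective_restrictScalars_obj f (P.complex.X m)
  π := ((ModuleCat.restrictScalars f).mapHomologicalComplex _).map P.π ≫
    (HomologicalComplex.singleMapHomologicalComplex (ModuleCat.restrictScalars f)
      (ComplexShape.down ℕ) 0).hom.app N
  quasiIso := by
    have : QuasiIso (((ModuleCat.restrictScalars f).mapHomologicalComplex _).map P.π) :=
      ⟨fun _ => inferInstance⟩
    infer_instance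

/-- A projective resolution of `N` over `B` restricts to one over `A`, and `e` identifies the
two Hom complexes degreewise. -/
def extIsoOfHomEquiv {L : ModuleCat.{u} B} {L' : ModuleCat.{u} A}
    (e : ∀ P : ModuleCat.{u} B, (P ⟶ L) ≃+ ((ModuleCat.restrictScalars f).obj P ⟶ L'))
    (he : ∀ {P P' : ModuleCat.{u} B} (h : P' ⟶ P) (g : P ⟶ L),
      e P' (h ≫ g) = (ModuleCat.restrictScalars f).map h ≫ e P g)
    (N : ModuleCat.{u} B) (k : ℕ) :
    ((Ext ℤ (ModuleCat.{u} B) k).obj (.op N)).obj L ≅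
      ((Ext ℤ (ModuleCat.{u} A) k).obj (.op ((ModuleCat.restrictScalars f).obj N))).obj L' :=
  let P : ProjectiveResolution N := (HasProjectiveResolution.out (Z := N)).some
  P.isoExt k L ≪≫
    (HomologicalComplex.homologyFunctor _ _ k).mapIso
      (HomologicalComplex.Hom.isoOfComponents
        (fun i => (e (P.complex.X i)).toIntLinearEquiv.toModuleIso)
        (fun i j _ => ModuleCat.hom_ext (LinearMap.ext fun g => (he (P.complex.d j i) g).symm)) :
        P.complex.linearYonedaObj ℤ L ≅ (P.restrictScalars f).complex.linearYonedaObj ℤ L') ≪≫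
    ((P.restrictScalars f).isoExt k L').symm

end RestrictScalars

section Finiteness

variable {A B : Type u} [Ring A] [Ring B] (f : A →+* B)

lemma finite_restrictScalars_obj [Module.Finite A ((ModuleCat.restrictScalars f).obj (.of B B))]
    (M : ModuleCat.{u} B) [Module.Finite B M] :
    Module.Finite A ((ModuleCat.restrictScalars f).obj M) :=
  letI : Module A B := Module.compHom B f
  letI : Module B ((ModuleCat.restrictScalars f).obj M) := inferInstanceAs (Module B M)
  haveI : IsScalarTower A B ((ModuleCat.restrictScalars f).obj M) :=
    ⟨fun a b m => mul_smul (f a) b (show M from m)⟩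
  haveI : Module.Finite A B := ‹Module.Finite A ((ModuleCat.restrictScalars f).obj (.of B B))›
  haveI : Module.Finite B ((ModuleCat.restrictScalars f).obj M) := ‹Module.Finite B M›
  .trans B _

lemma finite_of_finite_restrictScalars_obj (M : ModuleCat.{u} B)
    [Module.Finite A ((ModuleCat.restrictScalars f).obj M)] : Module.Finite B M :=
  letI : SMul A B := ⟨fun a b => f a * b⟩
  letI : Module A M := inferInstanceAs (Module A ((ModuleCat.restrictScalars f).obj M))
  haveI : IsScalarTower A B M := ⟨fun a b m => mul_smul (f a) b m⟩
  haveI : Module.Finite A M := ‹Module.Finite A ((ModuleCat.restrictScalars f).obj M)›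
  .of_restrictScalars_finite A B M

end Finiteness

section TruncPoly

open CategoryTheory Limits

instance : Module.Free R ((ModuleCat.restrictScalars (truncC R n)).obj (.of _ (TruncPoly R n))) :=
  .of_equiv (coeffsLinearEquiv R n).symm

instance : Module.Finite R ((ModuleCat.restrictScalars (truncC R n)).obj (.of _ (TruncPoly R n))) :=
  .equiv (coeffsLinearEquiv R n).symm

variable {R n}

def truncConstCoeff (hn : 0 < n) : TruncPoly R n →+* R :=
  RingQuot.lift ⟨constantCoeff, by
    rintro _ _ ⟨rfl, rfl⟩
    rw [map_zero, constantCoeff_apply, coeff_X_pow, if_neg hn.ne]⟩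

lemma truncConstCoeff_comp_truncC (hn : 0 < n) :
    (truncConstCoeff hn).comp (truncC R n) = RingHom.id R :=
  RingHom.ext fun r => by
    rw [RingHom.comp_apply, truncC, RingHom.comp_apply, truncConstCoeff, truncMk,
      RingQuot.lift_mkRingHom_apply]
    exact coeff_C_zero

def restrictScalarsTruncConstCoeffIso (hn : 0 < n) (M : ModuleCat.{u} R) :
    (ModuleCat.restrictScalars (truncC R n)).obj
      ((ModuleCat.restrictScalars (truncConstCoeff hn)).obj M) ≅ M :=
  (ModuleCat.restrictScalarsComp'App (truncC R n) (truncConstCoeff hn) _ rfl M).symm ≪≫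
    ModuleCat.restrictScalarsId'App _ (truncConstCoeff_comp_truncC hn) M

end TruncPoly

section SomeExtNonzero

open CategoryTheory Limits

lemma someExtNonzero_iff_of_iso {Λ : Type u} [Ring Λ] {M M' : ModuleCat.{u} Λ} (e : M ≅ M') :
    SomeExtNonzero Λ M ↔ SomeExtNonzero Λ M' :=
  exists_congr fun k => not_congr (((Ext ℤ _ k).mapIso e.op).app _).symm.isZero_iff

variable {R n}

lemma someExtNonzero_iff_restrictScalars (hn : 0 < n) (N : ModuleCat.{u} (TruncPoly R n)) :
    SomeExtNonzero (TruncPoly R n) N ↔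
      SomeExtNonzero R ((ModuleCat.restrictScalars (truncC R n)).obj N) :=
  exists_congr fun k => not_congr <|
    (extIsoOfHomEquiv _ (frobeniusEquiv hn) (frobeniusEquiv_naturality hn) N k).isZero_iff

end SomeExtNonzero

theorem statement14_general (R : Type u) [Ring R] (n : ℕ) (hn : 2 ≤ n) :
    (∀ (M : Type u) (_ : AddCommGroup M) (_ : Module R M),
        Module.Finite R M → Nontrivial M → SomeExtNonzero R M) ↔
    (∀ (N : Type u) (_ : AddCommGroup N) (_ : Module (TruncPoly R n) N),
        Module.Finite (TruncPoly R n) N → Nontrivial N →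
          SomeExtNonzero (TruncPoly R n) N) := by
  have hn : 0 < n := by omega
  constructor
  · intro hR N _ _ _ hN
    exact (someExtNonzero_iff_restrictScalars hn (.of _ N)).2
      (hR _ _ _ (finite_restrictScalars_obj _ (.of _ N)) hN)
  · intro hΛ M _ _ _ hM
    let N := (ModuleCat.restrictScalars (truncConstCoeff (n := n) hn)).obj (.of R M)
    have e := restrictScalarsTruncConstCoeffIso hn (.of R M)
    have : Module.Finite R ((ModuleCat.restrictScalars (truncC R n)).obj N) :=
      .equiv e.symm.toLinearEquiv
    have : Module.Finite (TruncPoly R n) N := finite_of_finite_restrictScalars_obj (truncC R n) N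
    exact (someExtNonzero_iff_of_iso e).1
      ((someExtNonzero_iff_restrictScalars hn N).1 (hΛ N _ _ this hM))

/-- **Statement 14.** Let `R` be an Artin algebra and `n ≥ 2`. Then `R` satisfies the Strong
Nakayama Conjecture — for every nonzero finitely generated left `R`-module `M` there is a
`k ≥ 0` with `Ext^k_R(M, R) ≠ 0` — iff `R[t]/(t^n)` satisfies it. -/
theorem statement14 (R : Type u) [Ring R] (C : Type u) [CommRing C] [IsArtinianRing C]
    [Algebra C R] (hfg : Module.Finite C R) (n : ℕ) (hn : 2 ≤ n) :
    (∀ (M : Type u) (_ : AddCommGroup M) (_ : Module R M),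
        Module.Finite R M → Nontrivial M → SomeExtNonzero R M) ↔
    (∀ (N : Type u) (_ : AddCommGroup N) (_ : Module (TruncPoly R n) N),
        Module.Finite (TruncPoly R n) N → Nontrivial N →
          SomeExtNonzero (TruncPoly R n) N) :=
  statement14_general R n hn

end Paper
end
end

section
/- Let A be an abelian category, n ≥ 2, and 0 → X →f Y →g Z → 0 a short exact sequence in A[ε]^n (i.e., a sequence of morphisms of n-th differential objects that is short exact in A). Then for every 1 ≤ r ≤ n−1 there exist connecting morphisms ∂ : H_(r)(Z) → H_(n−r)(X) and ∂ : H_(n−r)(Z) → H_(r)(X) making the doubly infinite periodic sequence ⋯ →∂ H_(r)(X) → H_(r)(Y) → H_(r)(Z) →∂ H_(n−r)(X) → H_(n−r)(Y) → H_(n−r)(Z) →∂ H_(r)(X) → ⋯ exact, where the unlabeled maps are H_(r)(f), H_(r)(g), H_(n−r)(f), H_(n−r)(g). -/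
noncomputable section

namespace Paper

open CategoryTheory CategoryTheory.Limits

universe v u

variable {C : Type u} [Category.{v} C]

/-- The `k`-fold composition power of an endomorphism. -/
def cpow {X : C} (f : X ⟶ X) : ℕ → (X ⟶ X)
  | 0 => 𝟙 X
  | k + 1 => f ≫ cpow f k

lemma cpow_add {X : C} (f : X ⟶ X) (a b : ℕ) :
    cpow f (a + b) = cpow f a ≫ cpow f b := by
  induction a with
  | zero => simp [cpow]
  | succ k ih =>
    rw [Nat.succ_add]
    show f ≫ cpow f (k + b) = (f ≫ cpow f k) ≫ cpow f b
    rw [ih, Category.assoc]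

variable (C) in
/-- The category of `n`-th differential objects over an additive category `C`:
objects are pairs `(X, ε)` with `ε : X ⟶ X` satisfying `ε^n = 0`. -/
structure DiffObj [Preadditive C] (n : ℕ) where
  X : C
  ε : X ⟶ X
  pow_zero : cpow ε n = 0

variable [Preadditive C] {n : ℕ}

/-- Morphisms of `n`-th differential objects. -/
@[ext] structure DiffHom (A B : DiffObj C n) where
  hom : A.X ⟶ B.X
  comm : A.ε ≫ hom = hom ≫ B.ε

instance : Category (DiffObj C n) where
  Hom A B := DiffHom A B
  id A := ⟨𝟙 A.X, by simp⟩
  comp f g := ⟨f.hom ≫ g.hom, by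
    rw [← Category.assoc, f.comm, Category.assoc, g.comm, Category.assoc]⟩
  id_comp f := DiffHom.ext (Category.id_comp _)
  comp_id f := DiffHom.ext (Category.comp_id _)
  assoc f g h := DiffHom.ext (Category.assoc _ _ _)

/-- The underlying morphism in `C` of a morphism of differential objects. -/
def dhom {A B : DiffObj C n} (f : A ⟶ B) : A.X ⟶ B.X := DiffHom.hom f

lemma dcomm {A B : DiffObj C n} (f : A ⟶ B) : A.ε ≫ dhom f = dhom f ≫ B.ε := DiffHom.comm f

@[simp] lemma dhom_comp {A B D : DiffObj C n} (f : A ⟶ B) (g : B ⟶ D) :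
    dhom (f ≫ g) = dhom f ≫ dhom g := rfl

@[simp] lemma dhom_id (A : DiffObj C n) : dhom (𝟙 A) = 𝟙 A.X := rfl

section AddCommGroup

variable {A B : DiffObj C n}

instance : Zero (DiffHom A B) := ⟨⟨0, by simp⟩⟩
instance : Add (DiffHom A B) :=
  ⟨fun f g => ⟨f.hom + g.hom, by simp [f.comm, g.comm]⟩⟩
instance : Neg (DiffHom A B) := ⟨fun f => ⟨-f.hom, by simp [f.comm]⟩⟩
instance : Sub (DiffHom A B) :=
  ⟨fun f g => ⟨f.hom - g.hom, by simp [f.comm, g.comm]⟩⟩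
instance : SMul ℕ (DiffHom A B) :=
  ⟨fun k f => ⟨k • f.hom, by simp [f.comm]⟩⟩
instance : SMul ℤ (DiffHom A B) :=
  ⟨fun k f => ⟨k • f.hom, by simp [f.comm]⟩⟩

instance : AddCommGroup (DiffHom A B) :=
  Function.Injective.addCommGroup DiffHom.hom (fun _ _ h => DiffHom.ext h)
    rfl (fun _ _ => rfl) (fun _ => rfl) (fun _ _ => rfl) (fun _ _ => rfl) (fun _ _ => rfl)

end AddCommGroup

instance : Preadditive (DiffObj C n) where
  homGroup A B := inferInstanceAs (AddCommGroup (DiffHom A B))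
  add_comp P Q R' f f' g :=
    DiffHom.ext (Preadditive.add_comp _ _ _ (dhom f) (dhom f') (dhom g))
  comp_add P Q R' f g g' :=
    DiffHom.ext (Preadditive.comp_add _ _ _ (dhom f) (dhom g) (dhom g'))

@[simp] lemma dhom_add {A B : DiffObj C n} (f g : A ⟶ B) :
    dhom (f + g) = dhom f + dhom g := rfl

@[simp] lemma dhom_zero (A B : DiffObj C n) : dhom (0 : A ⟶ B) = 0 := rfl

variable (C n) in
/-- The forgetful functor `C[ε]^n → C`. -/
def Fgt : DiffObj C n ⥤ C where
  obj A := A.X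
  map f := dhom f
  map_id _ := rfl
  map_comp _ _ := rfl

instance : Functor.Additive (Fgt C n) where
  map_add := rfl

section Homology

variable {A : Type u} [Category.{v} A] [Abelian A] {n : ℕ}

lemma cpow_dhom_comm {P Q : DiffObj A n} (f : P ⟶ Q) (k : ℕ) :
    cpow P.ε k ≫ dhom f = dhom f ≫ cpow Q.ε k := by
  induction k with
  | zero =>
    show 𝟙 P.X ≫ dhom f = dhom f ≫ 𝟙 Q.X
    simp
  | succ m ih =>
    show (P.ε ≫ cpow P.ε m) ≫ dhom f = dhom f ≫ (Q.ε ≫ cpow Q.ε m)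
    rw [Category.assoc, ih, ← Category.assoc, dcomm f, Category.assoc]

/-- The short complex `X --ε^{n-r}--> X --ε^r--> X` attached to an `n`-th differential
object `(X, ε)`. -/
def scOf (P : DiffObj A n) (r : ℕ) (h : r ≤ n) : ShortComplex A :=
  ShortComplex.mk (cpow P.ε (n - r)) (cpow P.ε r)
    (by rw [← cpow_add, Nat.sub_add_cancel h]; exact P.pow_zero)

/-- The `r`-th homology `H_(r)(X) = Ker(ε^r)/Im(ε^{n-r})` of an `n`-th differential object. -/
def Hr (P : DiffObj A n) (r : ℕ) (h : r ≤ n) : A := (scOf P r h).homology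

/-- The morphism of short complexes attached to a morphism of differential objects. -/
def scMap {P Q : DiffObj A n} (f : P ⟶ Q) (r : ℕ) (h : r ≤ n) : scOf P r h ⟶ scOf Q r h where
  τ₁ := dhom f
  τ₂ := dhom f
  τ₃ := dhom f
  comm₁₂ := (cpow_dhom_comm f (n - r)).symm
  comm₂₃ := (cpow_dhom_comm f r).symm

/-- The induced morphism `H_(r)(f) : H_(r)(X) → H_(r)(Y)`. -/
def Hmap {P Q : DiffObj A n} (f : P ⟶ Q) (r : ℕ) (h : r ≤ n) : Hr P r h ⟶ Hr Q r h :=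
  ShortComplex.homologyMap (scMap f r h)

end Homology

/-- Exactness of a pair of composable morphisms at the middle object. -/
def ExactAt {A : Type u} [Category.{v} A] [Abelian A] {P Q R : A} (u : P ⟶ Q) (v : Q ⟶ R) :
    Prop :=
  ∃ w : u ≫ v = 0, (ShortComplex.mk u v w).Exact

/-!
The 2-periodic complex `⋯ → X --ε^r--> X --ε^{n-r}--> X --ε^r--> ⋯` has homology `H_(r)(X)` in
even and `H_(n-r)(X)` in odd degrees. A short exact sequence in `A[ε]^n` is a degreewise short
exact sequence of these complexes, and its long exact homology sequence, read off between the
degrees `0` and `1`, is the periodic sequence of the theorem; `∂` is its connecting morphism.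
-/

lemma refl_hom_comp_eq_comp_refl_hom {D : Type*} [Category D] {X : D} {f g : X ⟶ X}
    (hfg : f = g) :
    (Iso.refl X).hom ≫ f = g ≫ (Iso.refl X).hom := by
  simp [hfg]

lemma cpow_comp_cpow_eq_zero (P : DiffObj C n) {a b : ℕ} (hab : a + b = n) :
    cpow P.ε a ≫ cpow P.ε b = 0 := by
  rw [← cpow_add, hab, P.pow_zero]

section PeriodicComplex

def periodicD (P : DiffObj C n) (r : ℕ) (k : ℤ) : P.X ⟶ P.X :=
  if Even k then cpow P.ε r else cpow P.ε (n - r)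

def periodicComplex (P : DiffObj C n) (r : ℕ) (h : r ≤ n) : CochainComplex C ℤ :=
  CochainComplex.of (fun _ => P.X) (periodicD P r) fun k => by
    simp only [periodicD, Int.even_add_one]
    split_ifs
    · exact cpow_comp_cpow_eq_zero P (Nat.add_sub_cancel' h)
    · exact cpow_comp_cpow_eq_zero P (Nat.sub_add_cancel h)

variable (P : DiffObj C n) (r : ℕ) (h : r ≤ n) {i j : ℤ}

lemma periodicComplex_d (hij : i + 1 = j) : (periodicComplex P r h).d i j = periodicD P r i := by
  subst hij
  exact CochainComplex.of_d (fun _ => P.X) (periodicD P r) i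

lemma periodicComplex_d_even (hij : i + 1 = j) (hi : Even i) :
    (periodicComplex P r h).d i j = cpow P.ε r := by
  rw [periodicComplex_d P r h hij, periodicD, if_pos hi]

lemma periodicComplex_d_odd (hij : i + 1 = j) (hi : ¬Even i) :
    (periodicComplex P r h).d i j = cpow P.ε (n - r) := by
  rw [periodicComplex_d P r h hij, periodicD, if_neg hi]

end PeriodicComplex

section Abelian

variable {A : Type u} [Category.{v} A] [Abelian A]

lemma exactAt_of_iso {S : ShortComplex A} (hS : S.Exact) {P Q R : A}
    (e₁ : S.X₁ ≅ P) (e₂ : S.X₂ ≅ Q) (e₃ : S.X₃ ≅ R) :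
    ExactAt (e₁.inv ≫ S.f ≫ e₂.hom) (e₂.inv ≫ S.g ≫ e₃.hom) :=
  ⟨by simp, ShortComplex.exact_of_iso (ShortComplex.isoMk e₁ e₂ e₃ (by simp) (by simp)) hS⟩

lemma homologyMap_eq_of_sc'Iso {K L : CochainComplex A ℤ} (ψ : K ⟶ L) {i j k : ℤ}
    (hi : (ComplexShape.up ℤ).prev j = i) (hk : (ComplexShape.up ℤ).next j = k)
    {S T : ShortComplex A} (eK : K.sc' i j k ≅ S) (eL : L.sc' i j k ≅ T) (m : S ⟶ T)
    (hm : eK.hom ≫ m = (HomologicalComplex.shortComplexFunctor' A _ i j k).map ψ ≫ eL.hom) :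
    ShortComplex.homologyMap m =
      (K.homologyIsoSc' i j k hi hk ≪≫ ShortComplex.homologyMapIso eK).inv ≫
        HomologicalComplex.homologyMap ψ j ≫
          (L.homologyIsoSc' i j k hi hk ≪≫ ShortComplex.homologyMapIso eL).hom := by
  rw [Iso.eq_inv_comp]
  show (ShortComplex.homologyMap (K.isoSc' i j k hi hk).hom ≫ ShortComplex.homologyMap eK.hom) ≫
      ShortComplex.homologyMap m =
    ShortComplex.homologyMap ((HomologicalComplex.shortComplexFunctor A _ j).map ψ) ≫
      ShortComplex.homologyMap (L.isoSc' i j k hi hk).hom ≫ ShortComplex.homologyMap eL.hom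
  simp only [← ShortComplex.homologyMap_comp]
  congr 1
  simp only [Category.assoc, hm]
  exact ((HomologicalComplex.natIsoSc' A _ i j k hi hk).hom.naturality_assoc ψ eL.hom).symm

def periodicComplexMap {P Q : DiffObj A n} (φ : P ⟶ Q) (r : ℕ) (h : r ≤ n) :
    periodicComplex P r h ⟶ periodicComplex Q r h :=
  CochainComplex.ofHom (fun _ => dhom φ) fun i => by
    rw [periodicComplex_d Q r h rfl, periodicComplex_d P r h rfl]
    unfold periodicD
    split_ifs
    · exact (cpow_dhom_comm φ r).symm
    · exact (cpow_dhom_comm φ (n - r)).symm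

def periodicComplexScZeroIso (P : DiffObj A n) (r : ℕ) (h : r ≤ n) :
    (periodicComplex P r h).sc' (-1) 0 1 ≅ scOf P r h :=
  ShortComplex.isoMk (Iso.refl P.X) (Iso.refl P.X) (Iso.refl P.X)
    (refl_hom_comp_eq_comp_refl_hom
      (periodicComplex_d_odd P r h (show (-1 : ℤ) + 1 = 0 from rfl) (by decide)).symm)
    (refl_hom_comp_eq_comp_refl_hom
      (periodicComplex_d_even P r h (show (0 : ℤ) + 1 = 1 from rfl) (by decide)).symm)

def periodicComplexScOneIso (P : DiffObj A n) (r : ℕ) (h : r ≤ n) :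
    (periodicComplex P r h).sc' 0 1 2 ≅ scOf P (n - r) (Nat.sub_le n r) :=
  ShortComplex.isoMk (Iso.refl P.X) (Iso.refl P.X) (Iso.refl P.X)
    (refl_hom_comp_eq_comp_refl_hom ((congrArg (cpow P.ε) (Nat.sub_sub_self h)).trans
      (periodicComplex_d_even P r h (show (0 : ℤ) + 1 = 1 from rfl) (by decide)).symm))
    (refl_hom_comp_eq_comp_refl_hom
      (periodicComplex_d_odd P r h (show (1 : ℤ) + 1 = 2 from rfl) (by decide)).symm)

def homologyZeroIso (P : DiffObj A n) (r : ℕ) (h : r ≤ n) :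
    (periodicComplex P r h).homology 0 ≅ Hr P r h :=
  (periodicComplex P r h).homologyIsoSc' (-1) 0 1 (by simp) (by simp) ≪≫
    ShortComplex.homologyMapIso (periodicComplexScZeroIso P r h)

def homologyOneIso (P : DiffObj A n) (r : ℕ) (h : r ≤ n) :
    (periodicComplex P r h).homology 1 ≅ Hr P (n - r) (Nat.sub_le n r) :=
  (periodicComplex P r h).homologyIsoSc' 0 1 2 (by simp) (by simp) ≪≫
    ShortComplex.homologyMapIso (periodicComplexScOneIso P r h)

lemma Hmap_eq_homologyMap_zero {P Q : DiffObj A n} (φ : P ⟶ Q) (r : ℕ) (h : r ≤ n) :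
    Hmap φ r h = (homologyZeroIso P r h).inv ≫
      HomologicalComplex.homologyMap (periodicComplexMap φ r h) 0 ≫ (homologyZeroIso Q r h).hom :=
  homologyMap_eq_of_sc'Iso _ _ _ _ _ _
    (by ext <;> exact (Category.id_comp _).trans (Category.comp_id _).symm)

lemma Hmap_eq_homologyMap_one {P Q : DiffObj A n} (φ : P ⟶ Q) (r : ℕ) (h : r ≤ n) :
    Hmap φ (n - r) (Nat.sub_le n r) = (homologyOneIso P r h).inv ≫
      HomologicalComplex.homologyMap (periodicComplexMap φ r h) 1 ≫ (homologyOneIso Q r h).hom :=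
  homologyMap_eq_of_sc'Iso _ _ _ _ _ _
    (by ext <;> exact (Category.id_comp _).trans (Category.comp_id _).symm)

variable {X Y Z : DiffObj A n} (f : X ⟶ Y) (g : Y ⟶ Z) (hw : dhom f ≫ dhom g = 0)
  (hse : (ShortComplex.mk (dhom f) (dhom g) hw).ShortExact) (r : ℕ) (h : r ≤ n)

include hse in
lemma shortExact_periodicComplexMap :
    (ShortComplex.mk (periodicComplexMap f r h) (periodicComplexMap g r h)
      (by ext; exact hw)).ShortExact :=
  HomologicalComplex.shortExact_of_degreewise_shortExact _ fun _ => hse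

def connectingHom : Hr Z r h ⟶ Hr X (n - r) (Nat.sub_le n r) :=
  (homologyZeroIso Z r h).inv ≫
    (shortExact_periodicComplexMap f g hw hse r h).δ 0 1 rfl ≫ (homologyOneIso X r h).hom

include hse in
lemma exactAt_Hmap_Hmap : ExactAt (Hmap f r h) (Hmap g r h) := by
  rw [Hmap_eq_homologyMap_zero f, Hmap_eq_homologyMap_zero g]
  exact exactAt_of_iso ((shortExact_periodicComplexMap f g hw hse r h).homology_exact₂ 0) _ _ _

lemma exactAt_Hmap_connectingHom : ExactAt (Hmap g r h) (connectingHom f g hw hse r h) := by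
  rw [Hmap_eq_homologyMap_zero g]
  exact exactAt_of_iso ((shortExact_periodicComplexMap f g hw hse r h).homology_exact₃ 0 1 rfl)
    _ _ _

lemma exactAt_connectingHom_Hmap :
    ExactAt (connectingHom f g hw hse r h) (Hmap f (n - r) (Nat.sub_le n r)) := by
  rw [Hmap_eq_homologyMap_one f r h]
  exact exactAt_of_iso ((shortExact_periodicComplexMap f g hw hse r h).homology_exact₁ 0 1 rfl)
    _ _ _

end Abelian

/-- **Statement 18.** A short exact sequence `0 → X → Y → Z → 0` in `A[ε]^n` (i.e. a pair of
composable morphisms of `n`-th differential objects which is short exact in `A`) induces, for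
every `1 ≤ r ≤ n-1`, connecting morphisms `∂ : H_(r)(Z) → H_(n-r)(X)` making the doubly infinite
periodic sequence
`⋯ → H_(r)(X) → H_(r)(Y) → H_(r)(Z) → H_(n-r)(X) → H_(n-r)(Y) → H_(n-r)(Z) → H_(r)(X) → ⋯`
exact. -/
theorem statement18 (A : Type u) [Category.{v} A] [Abelian A] (n : ℕ)
    {X Y Z : DiffObj A n} (f : X ⟶ Y) (g : Y ⟶ Z) (hw : dhom f ≫ dhom g = 0)
    (hse : (ShortComplex.mk (dhom f) (dhom g) hw).ShortExact) :
    ∃ δ : ∀ (r : ℕ) (_h1 : 1 ≤ r) (_h2 : r ≤ n - 1), (Hr Z r (by omega) ⟶ Hr X (n - r) (by omega)),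
      ∀ (r : ℕ) (h1 : 1 ≤ r) (h2 : r ≤ n - 1),
        -- exactness at `H_(r)(Y)`
        ExactAt (Hmap f r (by omega)) (Hmap g r (by omega)) ∧
        -- exactness at `H_(r)(Z)`
        ExactAt (Hmap g r (by omega)) (δ r h1 h2) ∧
        -- exactness at `H_(n-r)(X)`
        ExactAt (δ r h1 h2) (Hmap f (n - r) (by omega)) :=
  ⟨fun r _ h2 => connectingHom f g hw hse r (by omega), fun r _ h2 =>
    ⟨exactAt_Hmap_Hmap f g hw hse r (by omega), exactAt_Hmap_connectingHom f g hw hse r (by omega),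
      exactAt_connectingHom_Hmap f g hw hse r (by omega)⟩⟩

end Paper
end
end
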